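/- Let C be a finite subset of a Hilbert space H containing 0, with diameter d. Then for each integer n with 2^{-n} ≤ d there exists a finite set C_n ⊂ C − C (differences of elements of C) such that every c ∈ C_n has norm |c|_H ≤ 2^{-n+2}, the cardinality of C_n is at most N_{2^{-n}} + 1 where N_λ is the λ-covering number of C by balls centered in C, and every element c ∈ C can be written as c = Σ_{n : 2^{-n} ≤ 2d} c_n with c_n ∈ C_n (a finite sum, since C is finite). -/

import Mathlib

/-!
For every level `n` fix a minimal `2^{-n}`-net `S_n` of `C` and a map `π_n : C → S_n ∪ {0}` that
moves each point by at most `2^{-n}` and sends the points of norm at most `2^{-n}` to `0`. Take a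
level `M` finer than every distance between distinct points of `C`, and approximate `c ∈ C` by the
chain `p_n(c) = c` for `n ≥ M`, `p_{n-1}(c) = π_{n-1}(p_n(c))` below. By the choice of `M`, `π_n`
fixes every point of `C` when `n ≥ M`, so `p_n(c) ∈ S_n ∪ {0}` at every level. The increment
`c_n = p_n(c) - p_{n-1}(c)` is therefore a function of `p_n(c)`, so it takes at most
`N_{2^{-n}} + 1` values; it has norm at most `2^{-n+1}`; it vanishes once `2^{-n} > 2d`, because
both approximations are then `0`; and the increments telescope to `p_M(c) - p_n(c) = c` for `n`
small enough.
-/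

/-- `N_λ`: the minimum number of balls of radius `λ` centered at points of `C`
needed to cover `C`. -/
noncomputable def covNum {H : Type*} [NormedAddCommGroup H] (C : Set H) (lam : ℝ) : ℕ :=
  sInf {n : ℕ | ∃ s : Finset H, ↑s ⊆ C ∧ s.card = n ∧ ∀ c ∈ C, ∃ b ∈ s, ‖c - b‖ ≤ lam}

open Finset Filter Topology

section Chain

variable {α : Type*} (π : ℤ → α → α) (M : ℤ) (c : α)

def chainingApprox (n : ℤ) : α :=
  if n < M then π n (chainingApprox (n + 1)) else c
termination_by (M - n).toNat

variable {π M c}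

theorem chainingApprox_of_le {n : ℤ} (h : M ≤ n) : chainingApprox π M c n = c := by
  rw [chainingApprox, if_neg h.not_gt]

theorem chainingApprox_of_lt {n : ℤ} (h : n < M) :
    chainingApprox π M c n = π n (chainingApprox π M c (n + 1)) := by
  rw [chainingApprox, if_pos h]

theorem chainingApprox_sub_one (n : ℤ) :
    chainingApprox π M c (n - 1) =
      if n ≤ M then π (n - 1) (chainingApprox π M c n) else chainingApprox π M c n := by
  split_ifs with h
  · rw [chainingApprox_of_lt (by omega), sub_add_cancel]
  · rw [chainingApprox_of_le (by omega), chainingApprox_of_le (by omega)]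

theorem chainingApprox_mem {s : ℤ → Set α} (hπ : ∀ n < M, ∀ x ∈ s (n + 1), π n x ∈ s n)
    (hc : ∀ n, M ≤ n → c ∈ s n) (n : ℤ) : chainingApprox π M c n ∈ s n := by
  rcases lt_or_ge n M with h | h
  · rw [chainingApprox_of_lt h]
    exact hπ n h _ (chainingApprox_mem hπ hc (n + 1))
  · rw [chainingApprox_of_le h]
    exact hc n h
termination_by (M - n).toNat

end Chain

section Telescope

variable {G : Type*} [AddCommGroup G] {f : ℤ → G} {a b : ℤ} {x y : G}

theorem support_sub_sub_one_subset (ha : ∀ n ≤ a, f n = x) (hb : ∀ n, b ≤ n → f n = y) :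
    Function.support (fun n => f n - f (n - 1)) ⊆ Set.Ioc a b := by
  intro n hn
  by_contra h
  refine hn (show f n - f (n - 1) = 0 from ?_)
  rcases le_or_gt n a with hna | han
  · rw [ha n hna, ha (n - 1) (by omega), sub_self]
  · rw [hb n (by grind), hb (n - 1) (by grind), sub_self]

theorem sum_Ioc_sub_sub_one (f : ℤ → G) (hab : a ≤ b) :
    ∑ n ∈ Ioc a b, (f n - f (n - 1)) = f b - f a := by
  induction b, hab using Int.leInduction with
  | base => simp
  | succ b hab ih =>
    rw [← Order.succ_eq_add_one, ← insert_Ioc_right_eq_Ioc_succ hab, sum_insert (by simp), ih,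
      Order.succ_eq_add_one, add_sub_cancel_right]
    abel

theorem finsum_sub_sub_one (ha : ∀ n ≤ a, f n = x) (hb : ∀ n, b ≤ n → f n = y) :
    ∑ᶠ n, (f n - f (n - 1)) = y - x := by
  rw [finsum_eq_sum_of_support_subset _ (s := Ioc a b)
    (by simpa using support_sub_sub_one_subset ha hb)]
  rcases le_or_gt a b with hab | hba
  · rw [sum_Ioc_sub_sub_one f hab, hb b le_rfl, ha a le_rfl]
  · rw [Ioc_eq_empty_of_le hba.le, sum_empty, ← hb b le_rfl, ha b hba.le, sub_self]

end Telescope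

section Covering

variable {H : Type*} [NormedAddCommGroup H]

theorem Finset.exists_eq_of_norm_sub_le_two_zpow_neg (C : Finset H) :
    ∃ M : ℤ, ∀ a ∈ C, ∀ b ∈ C, ‖a - b‖ ≤ (2 : ℝ) ^ (-M) → a = b := by
  have hev : ∀ᶠ m : ℕ in atTop, ∀ p ∈ C ×ˢ C, ‖p.1 - p.2‖ ≤ ((2 : ℝ) ^ m)⁻¹ → p.1 = p.2 := by
    refine (eventually_all_finset _).2 fun p _ => ?_
    by_cases h : p.1 = p.2
    · exact .of_forall fun _ _ => h
    · have hlim : Tendsto (fun m : ℕ => ((2 : ℝ) ^ m)⁻¹) atTop (𝓝 0) :=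
        tendsto_inv_atTop_zero.comp (tendsto_pow_atTop_atTop_of_one_lt one_lt_two)
      filter_upwards [hlim.eventually (gt_mem_nhds (norm_sub_pos_iff.2 h))] with m hm hle
      exact absurd (hle.trans_lt hm) (lt_irrefl _)
  obtain ⟨m, hm⟩ := hev.exists
  exact ⟨m, fun a ha b hb hab => hm (a, b) (mem_product.2 ⟨ha, hb⟩) (by simpa [zpow_neg] using hab)⟩

theorem exists_finset_card_eq_covNum (C : Finset H) {r : ℝ} (hr : 0 ≤ r) :
    ∃ S : Finset H, S ⊆ C ∧ S.card = covNum (C : Set H) r ∧ ∀ c ∈ C, ∃ b ∈ S, ‖c - b‖ ≤ r := by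
  obtain ⟨S, hSC, hcard, hcov⟩ := Nat.sInf_mem (s := {n : ℕ | ∃ s : Finset H, ↑s ⊆ (C : Set H) ∧
      s.card = n ∧ ∀ c ∈ (C : Set H), ∃ b ∈ s, ‖c - b‖ ≤ r})
    ⟨C.card, C, subset_rfl, rfl, fun c hc => ⟨c, hc, by simpa using hr⟩⟩
  exact ⟨S, coe_subset.1 hSC, hcard, hcov⟩

theorem Finset.norm_le_diam_of_mem {C : Finset H} (h0 : (0 : H) ∈ C) {x : H} (hx : x ∈ C) :
    ‖x‖ ≤ Metric.diam (C : Set H) := by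
  simpa using Metric.dist_le_diam_of_mem C.finite_toSet.isBounded (mem_coe.2 hx) (mem_coe.2 h0)

end Covering

-- `net` is a minimal `r`-net of `C` together with `0`, which accounts for the `+ 1`.
structure ChainingLevel {H : Type*} [NormedAddCommGroup H] (C : Finset H) (r : ℝ) where
  net : Finset H
  net_subset : net ⊆ C
  card_net_le : net.card ≤ covNum (C : Set H) r + 1
  proj : H → H
  proj_mem : ∀ x ∈ C, proj x ∈ net
  norm_sub_proj_le : ∀ x ∈ C, ‖x - proj x‖ ≤ r
  proj_eq_zero : ∀ x, ‖x‖ ≤ r → proj x = 0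

namespace ChainingLevel

variable {H : Type*} [NormedAddCommGroup H] {C : Finset H}

theorem nonempty (h0 : (0 : H) ∈ C) {r : ℝ} (hr : 0 ≤ r) : Nonempty (ChainingLevel C r) := by
  classical
  obtain ⟨S, hSC, hcard, hcov⟩ := exists_finset_card_eq_covNum C hr
  choose! f hfS hf using hcov
  exact ⟨{ net := insert 0 S
           net_subset := insert_subset h0 hSC
           card_net_le := hcard ▸ card_insert_le 0 S
           proj := fun x => if ‖x‖ ≤ r then 0 else f x
           proj_mem := fun x hx => by
             split_ifs
             exacts [mem_insert_self 0 S, mem_insert_of_mem (hfS x hx)]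
           norm_sub_proj_le := fun x hx => by
             split_ifs with h
             exacts [by simpa using h, hf x hx]
           proj_eq_zero := fun x hx => if_pos hx }⟩

theorem mem_net {r : ℝ} (L : ChainingLevel C r) (hsep : ∀ a ∈ C, ∀ b ∈ C, ‖a - b‖ ≤ r → a = b)
    {x : H} (hx : x ∈ C) : x ∈ L.net :=
  hsep x hx _ (L.net_subset (L.proj_mem x hx)) (L.norm_sub_proj_le x hx) ▸ L.proj_mem x hx

variable (L : ∀ n : ℤ, ChainingLevel C ((2 : ℝ) ^ (-n))) (M : ℤ)

def approx (c : H) : ℤ → H :=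
  chainingApprox (fun n => (L n).proj) M c

def increments [DecidableEq H] (n : ℤ) : Finset H :=
  (L n).net.image fun y => y - if n ≤ M then (L (n - 1)).proj y else y

variable {L M} {c : H}

theorem approx_of_le {n : ℤ} (h : M ≤ n) : approx L M c n = c :=
  chainingApprox_of_le h

theorem approx_mem_net (hM : ∀ a ∈ C, ∀ b ∈ C, ‖a - b‖ ≤ (2 : ℝ) ^ (-M) → a = b) (hc : c ∈ C)
    (n : ℤ) : approx L M c n ∈ (L n).net := by
  refine chainingApprox_mem (s := fun n => (L n).net)
    (fun n _ x hx => (L n).proj_mem x ((L (n + 1)).net_subset hx)) (fun n hn => ?_) n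
  refine (L n).mem_net (fun a ha b hb hab => hM a ha b hb (hab.trans ?_)) hc
  exact zpow_le_zpow_right₀ one_le_two (neg_le_neg hn)

theorem approx_eq_zero (h0 : (0 : H) ∈ C)
    (hM : ∀ a ∈ C, ∀ b ∈ C, ‖a - b‖ ≤ (2 : ℝ) ^ (-M) → a = b) (hc : c ∈ C) {n : ℤ}
    (hn : Metric.diam (C : Set H) < (2 : ℝ) ^ (-n)) : approx L M c n = 0 := by
  rcases lt_or_ge n M with h | h
  · rw [approx, chainingApprox_of_lt h]
    have hmem := (L (n + 1)).net_subset (approx_mem_net hM hc (n + 1))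
    exact (L n).proj_eq_zero _ ((norm_le_diam_of_mem h0 hmem).trans hn.le)
  · rw [approx_of_le h]
    refine hM c hc 0 h0 ?_
    rw [sub_zero]
    exact (norm_le_diam_of_mem h0 hc).trans
      (hn.le.trans (zpow_le_zpow_right₀ one_le_two (neg_le_neg h)))

theorem exists_approx_eq_zero_of_le (h0 : (0 : H) ∈ C)
    (hM : ∀ a ∈ C, ∀ b ∈ C, ‖a - b‖ ≤ (2 : ℝ) ^ (-M) → a = b) (hc : c ∈ C) :
    ∃ A : ℤ, ∀ n ≤ A, approx L M c n = 0 := by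
  obtain ⟨k, hk⟩ := pow_unbounded_of_one_lt (Metric.diam (C : Set H)) one_lt_two
  refine ⟨-k, fun n hn => approx_eq_zero h0 hM hc (hk.trans_le ?_)⟩
  rw [← zpow_natCast]
  exact zpow_le_zpow_right₀ one_le_two (by omega)

theorem approx_sub_approx_sub_one_eq_zero (h0 : (0 : H) ∈ C)
    (hM : ∀ a ∈ C, ∀ b ∈ C, ‖a - b‖ ≤ (2 : ℝ) ^ (-M) → a = b) (hc : c ∈ C) {n : ℤ}
    (hn : 2 * Metric.diam (C : Set H) < (2 : ℝ) ^ (-n)) :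
    approx L M c n - approx L M c (n - 1) = 0 := by
  have hd : Metric.diam (C : Set H) < (2 : ℝ) ^ (-n) := by
    linarith [Metric.diam_nonneg (s := (C : Set H))]
  have hd' : Metric.diam (C : Set H) < (2 : ℝ) ^ (-(n - 1)) :=
    hd.trans_le (zpow_le_zpow_right₀ one_le_two (by omega))
  rw [approx_eq_zero h0 hM hc hd, approx_eq_zero h0 hM hc hd', sub_self]

variable [DecidableEq H]

theorem approx_sub_approx_sub_one_mem_increments
    (hM : ∀ a ∈ C, ∀ b ∈ C, ‖a - b‖ ≤ (2 : ℝ) ^ (-M) → a = b) (hc : c ∈ C) (n : ℤ) :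
    approx L M c n - approx L M c (n - 1) ∈ increments L M n := by
  rw [approx, chainingApprox_sub_one]
  exact mem_image_of_mem _ (approx_mem_net hM hc n)

variable (L M)

theorem increments_subset (n : ℤ) :
    ↑(increments L M n) ⊆ {z : H | ∃ a ∈ C, ∃ b ∈ C, z = a - b} := by
  intro z hz
  obtain ⟨y, hy, rfl⟩ := mem_image.1 (mem_coe.1 hz)
  have hyC := (L n).net_subset hy
  split_ifs
  exacts [⟨y, hyC, _, (L (n - 1)).net_subset ((L (n - 1)).proj_mem y hyC), rfl⟩,
    ⟨y, hyC, y, hyC, rfl⟩]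

theorem norm_le_of_mem_increments {n : ℤ} {z : H} (hz : z ∈ increments L M n) :
    ‖z‖ ≤ (2 : ℝ) ^ (-n + 2) := by
  obtain ⟨y, hy, rfl⟩ := mem_image.1 hz
  have hle : (2 : ℝ) ^ (-(n - 1)) ≤ (2 : ℝ) ^ (-n + 2) :=
    zpow_le_zpow_right₀ one_le_two (by omega)
  split_ifs
  · exact ((L (n - 1)).norm_sub_proj_le y ((L n).net_subset hy)).trans hle
  · simpa using zpow_nonneg zero_le_two _

theorem card_increments_le (n : ℤ) :
    (increments L M n).card ≤ covNum (C : Set H) ((2 : ℝ) ^ (-n)) + 1 :=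
  card_image_le.trans (L n).card_net_le

end ChainingLevel

open ChainingLevel

theorem chaining_decomposition_general
    {H : Type*} [NormedAddCommGroup H]
    (C : Finset H) (h0 : (0 : H) ∈ C) :
    ∃ Cn : ℤ → Finset H,
      (∀ n : ℤ, (2 : ℝ) ^ (-n) ≤ 2 * Metric.diam (↑C : Set H) →
        (↑(Cn n) ⊆ {z : H | ∃ a ∈ C, ∃ b ∈ C, z = a - b} ∧
          (∀ c ∈ Cn n, ‖c‖ ≤ (2 : ℝ) ^ (-n + 2)) ∧
          (Cn n).card ≤ covNum (↑C : Set H) ((2 : ℝ) ^ (-n)) + 1)) ∧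
      ∀ c ∈ C, ∃ g : ℤ → H,
        (∀ n : ℤ, g n ≠ 0 → g n ∈ Cn n ∧ (2 : ℝ) ^ (-n) ≤ 2 * Metric.diam (↑C : Set H)) ∧
        (Function.support g).Finite ∧ c = ∑ᶠ n : ℤ, g n := by
  classical
  obtain ⟨M, hM⟩ := C.exists_eq_of_norm_sub_le_two_zpow_neg
  have L (n : ℤ) : ChainingLevel C ((2 : ℝ) ^ (-n)) :=
    (ChainingLevel.nonempty h0 (zpow_nonneg zero_le_two _)).some
  refine ⟨increments L M, fun n _ => ⟨increments_subset L M n,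
    fun z hz => norm_le_of_mem_increments L M hz, card_increments_le L M n⟩, fun c hc => ?_⟩
  obtain ⟨A, hbot⟩ := exists_approx_eq_zero_of_le (L := L) h0 hM hc
  have htop (n : ℤ) (hn : M ≤ n) : approx L M c n = c := approx_of_le hn
  refine ⟨fun n => approx L M c n - approx L M c (n - 1),
    fun n hn => ⟨approx_sub_approx_sub_one_mem_increments hM hc n, ?_⟩,
    (Set.finite_Ioc A M).subset (support_sub_sub_one_subset hbot htop),
    by rw [finsum_sub_sub_one hbot htop, sub_zero]⟩
  by_contra! h
  exact hn (approx_sub_approx_sub_one_eq_zero h0 hM hc h)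

/-- Chaining decomposition: for a finite set `C ∋ 0` in a Hilbert space with
diameter `d`, there are sets `C_n ⊆ C - C` of cardinality at most `N_{2^{-n}} + 1`
consisting of elements of norm at most `2^{-n+2}`, such that every `c ∈ C` is a
finite sum `c = Σ_n c_n` with `c_n ∈ C_n`, over `n` with `2^{-n} ≤ 2d`. -/
theorem chaining_decomposition
    {H : Type*} [NormedAddCommGroup H] [InnerProductSpace ℝ H] [CompleteSpace H]
    (C : Finset H) (h0 : (0 : H) ∈ C) :
    ∃ Cn : ℤ → Finset H,
      (∀ n : ℤ, (2 : ℝ) ^ (-n) ≤ 2 * Metric.diam (↑C : Set H) →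
        (↑(Cn n) ⊆ {z : H | ∃ a ∈ C, ∃ b ∈ C, z = a - b} ∧
          (∀ c ∈ Cn n, ‖c‖ ≤ (2 : ℝ) ^ (-n + 2)) ∧
          (Cn n).card ≤ covNum (↑C : Set H) ((2 : ℝ) ^ (-n)) + 1)) ∧
      ∀ c ∈ C, ∃ g : ℤ → H,
        (∀ n : ℤ, g n ≠ 0 → g n ∈ Cn n ∧ (2 : ℝ) ^ (-n) ≤ 2 * Metric.diam (↑C : Set H)) ∧
        (Function.support g).Finite ∧ c = ∑ᶠ n : ℤ, g n :=
  chaining_decomposition_general C h0
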